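/- arXiv:0905.0833 — 2 statements merged into one kernel-verified Lean document; each statement's English description precedes it below -/
import Mathlib

section
/- Let H be a group with trivial center, and let Q be a group. Suppose Γ₁ and Γ₂ are groups containing H as a normal subgroup, equipped with isomorphisms φᵢ: Γᵢ/H ≅ Q (i = 1, 2), and suppose the induced homomorphisms Q → Out(H) given by the conjugation actions coincide. Then there exists an isomorphism θ: Γ₁ ≅ Γ₂ that restricts to the identity on H and induces the identity on Q (i.e., φ₂ ∘ θ̄ = φ₁, where θ̄ is the map induced by θ on the quotients by H). -/
/-!
Send each `γ ∈ Γᵢ` to the pair (conjugation by `γ` on `H`, image of `γ` in `Q`) in `Aut(H) × Q`.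
This is injective: if `γ` maps to `1` in `Q` then `γ ∈ H`, and if it moreover acts trivially
by conjugation it is central in `H`, hence trivial. Since `H` maps to the pairs
`(Inn h, 1)`, the image is stable under left multiplication by `Inn(H) × 1`; the hypothesis on the
outer actions then says precisely that both extensions have the same image. The required `θ` is
the composite `Γ₁ ≅ image ≅ Γ₂`.
-/

theorem MonoidHom.exists_mulEquiv_apply_eq_of_range_eq {G₁ G₂ K : Type*} [Group G₁] [Group G₂]
    [Group K] {f₁ : G₁ →* K} {f₂ : G₂ →* K} (hf₁ : Function.Injective f₁)
    (hf₂ : Function.Injective f₂) (hrange : f₁.range = f₂.range) :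
    ∃ θ : G₁ ≃* G₂, ∀ g, f₂ (θ g) = f₁ g :=
  ⟨((ofInjective hf₁).trans (MulEquiv.subgroupCongr hrange)).trans (ofInjective hf₂).symm,
    fun _ => apply_ofInjective_symm hf₂ _⟩

theorem MulAut.mem_center_of_conj_eq_one {G : Type*} [Group G] {g : G}
    (hg : MulAut.conj g = 1) : g ∈ Subgroup.center G :=
  Subgroup.mem_center_iff.mpr fun x => (mul_inv_eq_iff_eq_mul.mp (DFunLike.congr_fun hg x)).symm

section Extension

variable {H Γ Q : Type*} [Group H] [Group Γ] [Group Q]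
  (i : H →* Γ) (hi : Function.Injective i) [i.range.Normal]

noncomputable def normalConj : Γ →* MulAut H :=
  (MulAut.congr (MonoidHom.ofInjective hi).symm).toMonoidHom.comp MulAut.conjNormal

theorem apply_normalConj_apply (γ : Γ) (h : H) : i (normalConj i hi γ h) = γ * i h * γ⁻¹ := by
  change i ((MonoidHom.ofInjective hi).symm (MulAut.conjNormal γ (MonoidHom.ofInjective hi h))) = _
  rw [MonoidHom.apply_ofInjective_symm hi, MulAut.conjNormal_apply]
  rfl

theorem normalConj_apply_eq_of_conj_eq {γ : Γ} {h k : H} (hk : γ * i h * γ⁻¹ = i k) :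
    normalConj i hi γ h = k :=
  hi (by rw [apply_normalConj_apply, hk])

theorem normalConj_apply_self (h : H) : normalConj i hi (i h) = MulAut.conj h := by
  ext g
  exact normalConj_apply_eq_of_conj_eq i hi (by simp)

variable (φ : Γ ⧸ i.range ≃* Q)

noncomputable def conjProdQuotient : Γ →* MulAut H × Q :=
  (normalConj i hi).prod (φ.toMonoidHom.comp (QuotientGroup.mk' i.range))

theorem conjProdQuotient_apply (γ : Γ) :
    conjProdQuotient i hi φ γ = (normalConj i hi γ, φ (QuotientGroup.mk γ)) :=
  rfl

theorem conjProdQuotient_apply_self (h : H) :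
    conjProdQuotient i hi φ (i h) = (MulAut.conj h, 1) := by
  have hmk : (QuotientGroup.mk (i h) : Γ ⧸ i.range) = 1 :=
    (QuotientGroup.eq_one_iff _).mpr ⟨h, rfl⟩
  rw [conjProdQuotient_apply, normalConj_apply_self, hmk, map_one]

theorem conjProdQuotient_injective (hH : Subgroup.center H = ⊥) :
    Function.Injective (conjProdQuotient i hi φ) := by
  rw [← MonoidHom.ker_eq_bot_iff, eq_bot_iff]
  intro γ hγ
  have hconj : normalConj i hi γ = 1 := congrArg Prod.fst hγ
  have hquot : (QuotientGroup.mk γ : Γ ⧸ i.range) = 1 :=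
    φ.injective ((congrArg Prod.snd hγ).trans (map_one φ).symm)
  obtain ⟨h, rfl⟩ := (QuotientGroup.eq_one_iff γ).mp hquot
  rw [normalConj_apply_self] at hconj
  have hcenter := MulAut.mem_center_of_conj_eq_one hconj
  rw [hH, Subgroup.mem_bot] at hcenter
  rw [hcenter, map_one]
  exact one_mem _

theorem conjProdQuotient_apply_self_mul (h : H) (γ : Γ) :
    conjProdQuotient i hi φ (i h * γ) =
      (MulAut.conj h * normalConj i hi γ, φ (QuotientGroup.mk γ)) := by
  rw [map_mul, conjProdQuotient_apply_self, conjProdQuotient_apply, Prod.mk_mul_mk, one_mul]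

end Extension

section TwoExtensions

variable {H Q Γ₁ Γ₂ : Type*} [Group H] [Group Q] [Group Γ₁] [Group Γ₂]
  {i₁ : H →* Γ₁} {i₂ : H →* Γ₂} (hi₁ : Function.Injective i₁) (hi₂ : Function.Injective i₂)
  [i₁.range.Normal] [i₂.range.Normal]

theorem normalConj_eq_conj_mul {γ₁ : Γ₁} {γ₂ : Γ₂} {h₀ : H}
    (hγ : ∀ h k : H, γ₁ * i₁ h * γ₁⁻¹ = i₁ k → γ₂ * i₂ h * γ₂⁻¹ = i₂ (h₀ * k * h₀⁻¹)) :
    normalConj i₂ hi₂ γ₂ = MulAut.conj h₀ * normalConj i₁ hi₁ γ₁ := by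
  ext g
  exact normalConj_apply_eq_of_conj_eq i₂ hi₂ (hγ g _ (apply_normalConj_apply i₁ hi₁ γ₁ g).symm)

theorem range_conjProdQuotient_eq (φ₁ : Γ₁ ⧸ i₁.range ≃* Q) (φ₂ : Γ₂ ⧸ i₂.range ≃* Q)
    (hsame : ∀ (γ₁ : Γ₁) (γ₂ : Γ₂), φ₁ (QuotientGroup.mk γ₁) = φ₂ (QuotientGroup.mk γ₂) →
      ∃ h₀ : H, normalConj i₂ hi₂ γ₂ = MulAut.conj h₀ * normalConj i₁ hi₁ γ₁) :
    (conjProdQuotient i₁ hi₁ φ₁).range = (conjProdQuotient i₂ hi₂ φ₂).range := by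
  apply le_antisymm
  · rintro _ ⟨γ₁, rfl⟩
    obtain ⟨γ₂, hγ₂⟩ := (φ₂.surjective.comp QuotientGroup.mk_surjective) (φ₁ γ₁)
    obtain ⟨h₀, hh₀⟩ := hsame γ₁ γ₂ hγ₂.symm
    refine ⟨i₂ h₀⁻¹ * γ₂, ?_⟩
    rw [conjProdQuotient_apply_self_mul, hh₀, ← mul_assoc, ← map_mul, inv_mul_cancel,
      map_one, one_mul]
    exact congrArg _ hγ₂
  · rintro _ ⟨γ₂, rfl⟩
    obtain ⟨γ₁, hγ₁⟩ := (φ₁.surjective.comp QuotientGroup.mk_surjective) (φ₂ γ₂)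
    obtain ⟨h₀, hh₀⟩ := hsame γ₁ γ₂ hγ₁
    refine ⟨i₁ h₀ * γ₁, ?_⟩
    rw [conjProdQuotient_apply_self_mul, ← hh₀]
    exact congrArg _ hγ₁

end TwoExtensions

/-- Extensions of `Q` by a centerless group `H` are classified by their
induced map `Q → Out(H)`: if two extensions `1 → H → Γᵢ → Q → 1` (i = 1,2)
induce the same conjugation action up to inner automorphisms, then there is
an isomorphism `Γ₁ ≅ Γ₂` restricting to the identity on `H` and inducing the
identity on `Q`. -/
theorem extension_isomorphic_of_centerless_kernel_same_outer_action
    (H Q Γ₁ Γ₂ : Type) [Group H] [Group Q] [Group Γ₁] [Group Γ₂]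
    (hH : Subgroup.center H = ⊥)
    (i₁ : H →* Γ₁) (i₂ : H →* Γ₂)
    (hi₁ : Function.Injective i₁) (hi₂ : Function.Injective i₂)
    [i₁.range.Normal] [i₂.range.Normal]
    (φ₁ : Γ₁ ⧸ i₁.range ≃* Q) (φ₂ : Γ₂ ⧸ i₂.range ≃* Q)
    -- the two induced homomorphisms `Q → Out(H)` coincide: whenever `γ₁` and `γ₂`
    -- map to the same element of `Q`, their conjugation actions on `H` differ by
    -- an inner automorphism of `H`
    (hsame : ∀ (γ₁ : Γ₁) (γ₂ : Γ₂),
      φ₁ (QuotientGroup.mk γ₁) = φ₂ (QuotientGroup.mk γ₂) →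
      ∃ h₀ : H, ∀ h k : H, γ₁ * i₁ h * γ₁⁻¹ = i₁ k →
        γ₂ * i₂ h * γ₂⁻¹ = i₂ (h₀ * k * h₀⁻¹)) :
    ∃ θ : Γ₁ ≃* Γ₂,
      (∀ h : H, θ (i₁ h) = i₂ h) ∧
      (∀ γ : Γ₁, φ₂ (QuotientGroup.mk (θ γ)) = φ₁ (QuotientGroup.mk γ)) := by
  obtain ⟨θ, hθ⟩ := MonoidHom.exists_mulEquiv_apply_eq_of_range_eq
    (conjProdQuotient_injective i₁ hi₁ φ₁ hH) (conjProdQuotient_injective i₂ hi₂ φ₂ hH)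
    (range_conjProdQuotient_eq hi₁ hi₂ φ₁ φ₂ fun γ₁ γ₂ hγ =>
      (hsame γ₁ γ₂ hγ).imp fun _ => normalConj_eq_conj_mul hi₁ hi₂)
  refine ⟨θ, fun h => conjProdQuotient_injective i₂ hi₂ φ₂ hH ?_, fun γ => congrArg Prod.snd (hθ γ)⟩
  rw [hθ, conjProdQuotient_apply_self, conjProdQuotient_apply_self]
end

section
/- The group SL(2,ℤ) is isomorphic to the amalgamated free product (ℤ/4ℤ) *_{ℤ/2ℤ} (ℤ/6ℤ), where ℤ/2ℤ is embedded in ℤ/4ℤ and in ℤ/6ℤ as the unique subgroup of order 2 of each. -/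
/-- The family consisting of the cyclic groups `ℤ/4ℤ` and `ℤ/6ℤ`
(written multiplicatively), indexed by `Bool`. -/
def SL2ZAmalgam.Gfam : Bool → Type
  | true => Multiplicative (ZMod 4)
  | false => Multiplicative (ZMod 6)

instance : ∀ b, Group (SL2ZAmalgam.Gfam b)
  | true => inferInstanceAs (Group (Multiplicative (ZMod 4)))
  | false => inferInstanceAs (Group (Multiplicative (ZMod 6)))

/-- The embeddings of `ℤ/2ℤ` into `ℤ/4ℤ` and `ℤ/6ℤ` as the unique subgroup of
order two of each: `x ↦ 2x` and `x ↦ 3x` respectively. -/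
def SL2ZAmalgam.φfam : ∀ b, Multiplicative (ZMod 2) →* SL2ZAmalgam.Gfam b
  | true => show Multiplicative (ZMod 2) →* Multiplicative (ZMod 4) from
      AddMonoidHom.toMultiplicative
        (AddMonoidHom.mk' (fun x : ZMod 2 => ((2 * x.val : ℕ) : ZMod 4)) (by decide))
  | false => show Multiplicative (ZMod 2) →* Multiplicative (ZMod 6) from
      AddMonoidHom.toMultiplicative
        (AddMonoidHom.mk' (fun x : ZMod 2 => ((3 * x.val : ℕ) : ZMod 6)) (by decide))

/-!
Send the generator of `ℤ/4` to `S = !![0, -1; 1, 0]` and the generator of `ℤ/6` to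
`U = T * S = !![1, -1; 1, 0]`. Both send the element of order two to `-1`, so this defines a map
from the amalgamated product to `SL(2, ℤ)`, which is onto because `S` and `T` generate.

Injectivity is a ping-pong argument on `ℤ²`. The letters `±S` of `ℤ/4` outside the amalgamated
subgroup map the open quadrants `{xy > 0}` into `{xy < 0}`, the letters `±U, ±U²` of `ℤ/6` map
`{xy < 0}` back into `{xy > 0}`, and every such letter strictly increases `2x² + 2y² - xy`.
So no nonempty reduced word maps to `±1`, which by the normal form theorem for amalgamated
products is all that injectivity requires.
-/

open Function

namespace Monoid.CoprodI.NeWord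

variable {ι : Type*} {G : ι → Type*} [∀ i, Group (G i)] {K α β : Type*} [Group K] [MulAction K α]
  [Preorder β]

theorem lift_prod_smul_mem_and_lt (f : ∀ i, G i →* K) (X : ι → Set α) (μ : α → β)
    (P : ∀ i, G i → Prop)
    (hpp : ∀ i j, i ≠ j → ∀ g, P i g → ∀ x ∈ X j, f i g • x ∈ X i ∧ μ x < μ (f i g • x))
    {i j k : ι} (w : NeWord G i j) (hw : ∀ p ∈ w.toList, P p.1 p.2) (hk : j ≠ k) {x : α}
    (hx : x ∈ X k) : lift f w.prod • x ∈ X i ∧ μ x < μ (lift f w.prod • x) := by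
  induction w generalizing k x with
  | singleton g _ =>
    simpa using hpp _ _ hk g (hw ⟨_, g⟩ (by simp [toList])) x hx
  | append w₁ hne w₂ ih₁ ih₂ =>
    obtain ⟨hx₂, hlt₂⟩ := ih₂ (fun p hp => hw p (by simp [toList, hp])) hk hx
    obtain ⟨hx₁, hlt₁⟩ := ih₁ (fun p hp => hw p (by simp [toList, hp])) hne hx₂
    rw [append_prod, map_mul, mul_smul]
    exact ⟨hx₁, hlt₂.trans hlt₁⟩

end Monoid.CoprodI.NeWord

namespace Monoid.PushoutI

variable {ι : Type*} {G : ι → Type*} {H K : Type*} [∀ i, Group (G i)] [Group H] [Group K]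
  {φ : ∀ i, H →* G i}

theorem lift_ofCoprodI (f : ∀ i, G i →* K) (k : H →* K) (hf : ∀ i, (f i).comp (φ i) = k)
    (x : CoprodI G) : lift f k hf (ofCoprodI x) = CoprodI.lift f x := by
  induction x using CoprodI.induction_on with
  | one => simp
  | of g => simp [ofCoprodI_of]
  | mul x y hx hy => simp [hx, hy]

theorem NormalWord.reduced {d : NormalWord.Transversal φ} (w : NormalWord d) :
    Reduced φ w.toWord := by
  rintro ⟨i, g⟩ hg hrange
  have hc := d.compl i
  apply w.ne_one _ hg
  simpa using (hc.equiv_snd_eq_self_of_mem_of_one_mem (one_mem _) (w.normalized i g hg)).symm.trans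
    (hc.equiv_snd_eq_one_of_mem_of_one_mem (d.one_mem i) hrange)

theorem lift_injective_of_reduced {f : ∀ i, G i →* K} {k : H →* K}
    {hf : ∀ i, (f i).comp (φ i) = k} (hk : Injective k)
    (hw : ∀ w : CoprodI.Word G, Reduced φ w → w ≠ .empty → CoprodI.lift f w.prod ∉ k.range) :
    Injective (lift f k hf) := by
  classical
  have hφ (i : ι) : Injective (φ i) := .of_comp (f := f i) (by rwa [← MonoidHom.coe_comp, hf])
  obtain ⟨d⟩ := NormalWord.transversal_nonempty φ hφ
  rw [injective_iff_map_eq_one]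
  intro g hg
  set w := NormalWord.equiv (d := d) g
  have hgw : g = base φ w.head * ofCoprodI w.toWord.prod :=
    (NormalWord.equiv.symm_apply_apply g).symm
  rw [hgw, map_mul, lift_base, lift_ofCoprodI, ← eq_inv_mul_iff_mul_eq, mul_one, ← map_inv] at hg
  by_cases hempty : w.toWord = .empty
  · rw [hempty, CoprodI.Word.prod_empty, map_one, eq_comm, map_eq_one_iff _ hk, inv_eq_one] at hg
    rw [hgw, hempty, hg]
    simp
  · exact absurd ⟨_, hg.symm⟩ (hw _ w.reduced hempty)

theorem lift_injective_of_pingPong {α β : Type*} [MulAction K α] [Preorder β]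
    {f : ∀ i, G i →* K} {k : H →* K} {hf : ∀ i, (f i).comp (φ i) = k} (hk : Injective k)
    (X : ι → Set α) (μ : α → β) (hX : ∀ j, ∃ i ≠ j, (X i).Nonempty)
    (hμ : ∀ h x, μ (k h • x) ≤ μ x)
    (hpp : ∀ i j, i ≠ j → ∀ g ∉ (φ i).range, ∀ x ∈ X j, f i g • x ∈ X i ∧ μ x < μ (f i g • x)) :
    Injective (lift f k hf) := by
  refine lift_injective_of_reduced hk fun w hred hne ⟨h, hkh⟩ => ?_
  obtain ⟨i, j, w, rfl⟩ := CoprodI.NeWord.of_word w hne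
  obtain ⟨l, hlj, x, hx⟩ := hX j
  have hlt := (w.lift_prod_smul_mem_and_lt f X μ _ hpp hred hlj.symm hx).2
  rw [CoprodI.NeWord.prod, ← hkh] at hlt
  exact (hlt.trans_le (hμ h x)).false

end Monoid.PushoutI

open Matrix ModularGroup
open scoped MatrixGroups

def zmodPowersHom {n : ℕ} [NeZero n] {M : Type*} [Monoid M] (g : M) (hg : g ^ n = 1) :
    Multiplicative (ZMod n) →* M where
  toFun x := g ^ x.toAdd.val
  map_one' := by simp
  map_mul' x y := by
    rw [← pow_add, pow_eq_pow_mod (_ + _) hg, ← ZMod.val_add]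
    rfl

namespace SL2ZAmalgam

instance : ∀ b, DecidableEq (Gfam b)
  | true => inferInstanceAs (DecidableEq (Multiplicative (ZMod 4)))
  | false => inferInstanceAs (DecidableEq (Multiplicative (ZMod 6)))

instance : ∀ b, Fintype (Gfam b)
  | true => inferInstanceAs (Fintype (Multiplicative (ZMod 4)))
  | false => inferInstanceAs (Fintype (Multiplicative (ZMod 6)))

def U : SL(2, ℤ) := T * S

def factorHom : ∀ b, Gfam b →* SL(2, ℤ)
  | true => zmodPowersHom S (by decide)
  | false => zmodPowersHom U (by decide)

def centerHom : Multiplicative (ZMod 2) →* SL(2, ℤ) := zmodPowersHom (S ^ 2) (by decide)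

theorem factorHom_comp_φfam : ∀ b, (factorHom b).comp (φfam b) = centerHom
  | true => MonoidHom.ext (by decide)
  | false => MonoidHom.ext (by decide)

theorem centerHom_injective : Injective centerHom := by decide

theorem centerHom_val : ∀ h, (centerHom h).1 = 1 ∨ (centerHom h).1 = -1 := by decide

theorem factorHom_true_val_of_not_mem_range : ∀ g ∉ (φfam true).range,
    (factorHom true g).1 = !![0, -1; 1, 0] ∨ (factorHom true g).1 = !![0, 1; -1, 0] := by
  decide

theorem factorHom_false_val_of_not_mem_range : ∀ g ∉ (φfam false).range,
    (factorHom false g).1 = !![1, -1; 1, 0] ∨ (factorHom false g).1 = !![-1, 1; -1, 0] ∨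
      (factorHom false g).1 = !![0, -1; 1, -1] ∨ (factorHom false g).1 = !![0, 1; -1, 1] := by
  decide

def quadrant : Bool → Set (Fin 2 → ℤ)
  | true => {v | v 0 * v 1 < 0}
  | false => {v | 0 < v 0 * v 1}

/-- The sum of `x² + y²` and `x² - xy + y²`, the forms preserved by `S` and by `U`. -/
def potential (v : Fin 2 → ℤ) : ℤ := 2 * v 0 ^ 2 + 2 * v 1 ^ 2 - v 0 * v 1

theorem quadrant_nonempty : ∀ i, (quadrant i).Nonempty
  | true => ⟨![1, -1], by simp [quadrant]⟩
  | false => ⟨![1, 1], by simp [quadrant]⟩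

theorem potential_centerHom_smul (h : Multiplicative (ZMod 2)) (v : Fin 2 → ℤ) :
    potential (centerHom h • v) = potential v := by
  change potential ((centerHom h).1 *ᵥ v) = _
  rcases centerHom_val h with h | h <;> simp [h, potential]

theorem factorHom_smul_quadrant {i : Bool} {g : Gfam i} (hg : g ∉ (φfam i).range) {v : Fin 2 → ℤ}
    (hv : v ∈ quadrant !i) :
    factorHom i g • v ∈ quadrant i ∧ potential v < potential (factorHom i g • v) := by
  change _ *ᵥ v ∈ _ ∧ _ < potential (_ *ᵥ v)
  cases i <;> [rcases factorHom_false_val_of_not_mem_range g hg with h | h | h | h;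
    rcases factorHom_true_val_of_not_mem_range g hg with h | h] <;>
  · simp only [h, mulVec_fin_two, of_apply, cons_val', cons_val_zero, cons_val_one, empty_val',
      cons_val_fin_one, quadrant, potential, Bool.not_true, Bool.not_false,
      Set.mem_ofPred_eq] at hv ⊢
    constructor <;> nlinarith [sq_nonneg (v 0), sq_nonneg (v 1)]

noncomputable def toSL2Z : Monoid.PushoutI φfam →* SL(2, ℤ) :=
  Monoid.PushoutI.lift factorHom centerHom factorHom_comp_φfam

theorem toSL2Z_injective : Injective toSL2Z :=
  Monoid.PushoutI.lift_injective_of_pingPong centerHom_injective quadrant potential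
    (fun j => ⟨!j, by simp, quadrant_nonempty _⟩) (fun h v => (potential_centerHom_smul h v).le)
    (fun _ _ hij _ hg _ hv => factorHom_smul_quadrant hg (Bool.eq_not_of_ne hij.symm ▸ hv))

theorem toSL2Z_surjective : Surjective toSL2Z := by
  have hS : S ∈ toSL2Z.range :=
    ⟨.of (φ := φfam) true (.ofAdd (1 : ZMod 4)), (Monoid.PushoutI.lift_of ..).trans (pow_one S)⟩
  have hU : U ∈ toSL2Z.range :=
    ⟨.of (φ := φfam) false (.ofAdd (1 : ZMod 6)), (Monoid.PushoutI.lift_of ..).trans (pow_one U)⟩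
  have hT : T ∈ toSL2Z.range := by
    simpa [U] using mul_mem hU (inv_mem hS)
  rw [← MonoidHom.range_eq_top, eq_top_iff, ← SpecialLinearGroup.SL2Z_generators,
    Subgroup.closure_le, Set.insert_subset_iff, Set.singleton_subset_iff]
  exact ⟨hS, hT⟩

end SL2ZAmalgam

/-- `SL(2,ℤ)` is isomorphic to the amalgamated free product
`(ℤ/4ℤ) *_{ℤ/2ℤ} (ℤ/6ℤ)`, where `ℤ/2ℤ` is embedded in each factor as the
unique subgroup of order two. -/
theorem sl2z_iso_amalgamated_product :
    Nonempty (Matrix.SpecialLinearGroup (Fin 2) ℤ ≃* Monoid.PushoutI SL2ZAmalgam.φfam) :=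
  ⟨(MulEquiv.ofBijective _ ⟨SL2ZAmalgam.toSL2Z_injective, SL2ZAmalgam.toSL2Z_surjective⟩).symm⟩
end
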